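/- arXiv:1407.3070 — 8 statements merged into one kernel-verified Lean document; each statement's English description precedes it below -/
import Mathlib

section
/- Let μ > 0 and let u : [0,1] → ℝ be four times continuously differentiable with u''''(x) = μ² u(x) for all x ∈ [0,1]. If u(0) = 0, u'(0) = 0, u(1) = 0, u''(1) = 0 and u'''(1) = 0, then u is identically zero on [0,1]. -/
/-!
Put `k = √μ`, so `u'''' = k⁴ u`. Then `V = u'' - μ u` and `W = u'' + μ u` solve `V'' = -k² V`
and `W'' = k² W`, vanish at `1` and have slopes `∓ μ u'(1)` there, so
`V = -(μ u'(1) / k) sin (k (x - 1))` and `W = (μ u'(1) / k) sinh (k (x - 1))`.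
Since `u(0) = 0`, both equal `u''(0)` at `0`, which gives `μ u'(1) (sinh k + sin k) / k = 0`;
as `sinh k + sin k > 0`, `u'(1) = 0`, so `V = W = 0` and `u = (W - V) / (2μ) = 0`.
-/

open Real Set

theorem Real.sinh_add_sin_pos {x : ℝ} (hx : 0 < x) : 0 < sinh x + sin x := by
  have := abs_le.mp (abs_sin_le_abs.trans_eq (abs_of_pos hx))
  linarith [self_lt_sinh_iff.mpr hx]

namespace Convex

variable {s : Set ℝ} {b : ℝ}

theorem is_const_of_hasDerivWithinAt_zero (hs : Convex ℝ s) {f : ℝ → ℝ}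
    (hf : ∀ x ∈ s, HasDerivWithinAt f 0 s x) {x y : ℝ} (hx : x ∈ s) (hy : y ∈ s) :
    f x = f y := by
  simpa [sub_eq_zero] using
    hs.norm_image_sub_le_of_norm_hasDerivWithin_le (C := 0) hf (fun _ _ ↦ by simp) hy hx

theorem eqOn_zero_of_hasDerivWithinAt_const_mul (hs : Convex ℝ s) {a : ℝ} {p : ℝ → ℝ}
    (hp : ∀ x ∈ s, HasDerivWithinAt p (a * p x) s x) (hb : b ∈ s) (hpb : p b = 0) :
    EqOn p 0 s := by
  have hconst : ∀ x ∈ s, HasDerivWithinAt (fun x ↦ p x * exp (-a * x)) 0 s x := fun x hx ↦ by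
    have hexp : HasDerivAt (fun x ↦ exp (-a * x)) (exp (-a * x) * (-a * 1)) x :=
      ((hasDerivAt_id x).const_mul (-a)).exp
    exact ((hp x hx).mul hexp.hasDerivWithinAt).congr_deriv (by ring)
  intro x hx
  have := hs.is_const_of_hasDerivWithinAt_zero hconst hx hb
  simpa [hpb, (exp_pos _).ne'] using this

variable {c : ℝ} {y z : ℝ → ℝ}

/-- Uniqueness for `y'' = c y` with zero Cauchy data: for `c ≥ 0` the operator factors as
`(d/dx + √c)(d/dx - √c)`, for `c < 0` the energy `z² - c y²` is conserved and definite. -/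
theorem eqOn_zero_of_hasDerivWithinAt_second_order (hs : Convex ℝ s)
    (hy : ∀ x ∈ s, HasDerivWithinAt y (z x) s x) (hz : ∀ x ∈ s, HasDerivWithinAt z (c * y x) s x)
    (hb : b ∈ s) (hyb : y b = 0) (hzb : z b = 0) : EqOn y 0 s := by
  rcases le_or_gt 0 c with hc | hc
  · set k := √c
    have hk : k ^ 2 = c := sq_sqrt hc
    have hfactor : EqOn (fun x ↦ z x - k * y x) 0 s := by
      refine hs.eqOn_zero_of_hasDerivWithinAt_const_mul (a := -k) (fun x hx ↦ ?_) hb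
        (by simp [hyb, hzb])
      exact ((hz x hx).sub ((hy x hx).const_mul k)).congr_deriv (by rw [← hk]; ring)
    refine hs.eqOn_zero_of_hasDerivWithinAt_const_mul (a := k) (fun x hx ↦ ?_) hb hyb
    exact (hy x hx).congr_deriv (sub_eq_zero.mp (hfactor hx))
  · have henergy : ∀ x ∈ s, HasDerivWithinAt (fun x ↦ z x ^ 2 - c * y x ^ 2) 0 s x :=
      fun x hx ↦ (((hz x hx).pow 2).sub (((hy x hx).pow 2).const_mul c)).congr_deriv (by ring)
    intro x hx
    have := hs.is_const_of_hasDerivWithinAt_zero henergy hx hb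
    simp only [hyb, hzb] at this
    have : y x ^ 2 = 0 := by nlinarith [sq_nonneg (z x), sq_nonneg (y x)]
    simpa using this

theorem eqOn_of_hasDerivWithinAt_second_order (hs : Convex ℝ s) {Y Z : ℝ → ℝ}
    (hy : ∀ x ∈ s, HasDerivWithinAt y (z x) s x) (hz : ∀ x ∈ s, HasDerivWithinAt z (c * y x) s x)
    (hY : ∀ x ∈ s, HasDerivWithinAt Y (Z x) s x) (hZ : ∀ x ∈ s, HasDerivWithinAt Z (c * Y x) s x)
    (hb : b ∈ s) (hyb : y b = Y b) (hzb : z b = Z b) : EqOn y Y s := by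
  intro x hx
  refine sub_eq_zero.mp (hs.eqOn_zero_of_hasDerivWithinAt_second_order (y := y - Y) (z := z - Z)
    (c := c) (fun x hx ↦ (hy x hx).sub (hY x hx)) (fun x hx ↦ ?_) hb (sub_eq_zero.mpr hyb)
    (sub_eq_zero.mpr hzb) hx)
  exact ((hz x hx).sub (hZ x hx)).congr_deriv (by simp only [Pi.sub_apply]; ring)

variable {k : ℝ}

theorem eqOn_cos_add_sin_of_hasDerivWithinAt (hs : Convex ℝ s) (hk : k ≠ 0)
    (hy : ∀ x ∈ s, HasDerivWithinAt y (z x) s x)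
    (hz : ∀ x ∈ s, HasDerivWithinAt z (-k ^ 2 * y x) s x) (hb : b ∈ s) :
    EqOn y (fun x ↦ y b * cos (k * (x - b)) + z b / k * sin (k * (x - b))) s := by
  have hlin (x : ℝ) : HasDerivAt (fun x ↦ k * (x - b)) k x := by
    simpa using ((hasDerivAt_id x).sub_const b).const_mul k
  refine hs.eqOn_of_hasDerivWithinAt_second_order hy hz
    (Z := fun x ↦ -y b * k * sin (k * (x - b)) + z b * cos (k * (x - b)))
    (fun x _ ↦ ?_) (fun x _ ↦ ?_) hb (by simp) (by simp)
  · exact ((((hlin x).cos.const_mul (y b)).add ((hlin x).sin.const_mul (z b / k))).congr_deriv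
      (by field_simp)).hasDerivWithinAt
  · exact ((((hlin x).sin.const_mul (-y b * k)).add ((hlin x).cos.const_mul (z b))).congr_deriv
      (by field_simp; ring)).hasDerivWithinAt

theorem eqOn_cosh_add_sinh_of_hasDerivWithinAt (hs : Convex ℝ s) (hk : k ≠ 0)
    (hy : ∀ x ∈ s, HasDerivWithinAt y (z x) s x)
    (hz : ∀ x ∈ s, HasDerivWithinAt z (k ^ 2 * y x) s x) (hb : b ∈ s) :
    EqOn y (fun x ↦ y b * cosh (k * (x - b)) + z b / k * sinh (k * (x - b))) s := by
  have hlin (x : ℝ) : HasDerivAt (fun x ↦ k * (x - b)) k x := by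
    simpa using ((hasDerivAt_id x).sub_const b).const_mul k
  refine hs.eqOn_of_hasDerivWithinAt_second_order hy hz
    (Z := fun x ↦ y b * k * sinh (k * (x - b)) + z b * cosh (k * (x - b)))
    (fun x _ ↦ ?_) (fun x _ ↦ ?_) hb (by simp) (by simp)
  · exact ((((hlin x).cosh.const_mul (y b)).add ((hlin x).sinh.const_mul (z b / k))).congr_deriv
      (by field_simp)).hasDerivWithinAt
  · exact ((((hlin x).sinh.const_mul (y b * k)).add ((hlin x).cosh.const_mul (z b))).congr_deriv
      (by field_simp)).hasDerivWithinAt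

end Convex

section FourthOrder

variable {s : Set ℝ} {u : ℝ → ℝ} {a x : ℝ}

theorem ContDiffOn.hasDerivWithinAt_iteratedDerivWithin {n m : ℕ} (hu : ContDiffOn ℝ n u s)
    (hs : UniqueDiffOn ℝ s) (hm : m < n) (hx : x ∈ s) :
    HasDerivWithinAt (iteratedDerivWithin m u s) (iteratedDerivWithin (m + 1) u s x) s x := by
  rw [iteratedDerivWithin_succ]
  exact ((hu.differentiableOn_iteratedDerivWithin (mod_cast hm) hs) x hx).hasDerivWithinAt

theorem ContDiffOn.hasDerivWithinAt_iteratedDerivWithin_two_add_mul (hu : ContDiffOn ℝ 3 u s)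
    (hs : UniqueDiffOn ℝ s) (hx : x ∈ s) :
    HasDerivWithinAt (fun x ↦ iteratedDerivWithin 2 u s x + a * u x)
      (iteratedDerivWithin 3 u s x + a * derivWithin u s x) s x := by
  have hu' := hu.hasDerivWithinAt_iteratedDerivWithin hs (m := 0) (by norm_num) hx
  rw [iteratedDerivWithin_zero, iteratedDerivWithin_one] at hu'
  exact (hu.hasDerivWithinAt_iteratedDerivWithin hs (by norm_num) hx).add (hu'.const_mul a)

/-- The factorisation `d⁴/dx⁴ - a² = (d²/dx² - a)(d²/dx² + a)`. -/
theorem ContDiffOn.hasDerivWithinAt_iteratedDerivWithin_three_add_mul (hu : ContDiffOn ℝ 4 u s)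
    (hs : UniqueDiffOn ℝ s) (heq : ∀ x ∈ s, iteratedDerivWithin 4 u s x = a ^ 2 * u x)
    (hx : x ∈ s) :
    HasDerivWithinAt (fun x ↦ iteratedDerivWithin 3 u s x + a * derivWithin u s x)
      (a * (iteratedDerivWithin 2 u s x + a * u x)) s x := by
  have hu' := hu.hasDerivWithinAt_iteratedDerivWithin hs (m := 1) (by norm_num) hx
  rw [iteratedDerivWithin_one] at hu'
  exact ((hu.hasDerivWithinAt_iteratedDerivWithin hs (by norm_num) hx).add
    (hu'.const_mul a)).congr_deriv (by rw [heq x hx]; ring)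

end FourthOrder

theorem beam_vanishing_general (μ : ℝ) (hμ : 0 < μ) (u : ℝ → ℝ)
    (hu : ContDiffOn ℝ 4 u (Icc 0 1))
    (heq : ∀ x ∈ Icc (0:ℝ) 1, iteratedDerivWithin 4 u (Icc 0 1) x = μ ^ 2 * u x)
    (h0 : u 0 = 0)
    (h1 : u 1 = 0)
    (h1'' : iteratedDerivWithin 2 u (Icc 0 1) 1 = 0)
    (h1''' : iteratedDerivWithin 3 u (Icc 0 1) 1 = 0) :
    ∀ x ∈ Icc (0:ℝ) 1, u x = 0 := by
  obtain ⟨k, hk, rfl⟩ : ∃ k, 0 < k ∧ μ = k ^ 2 := ⟨√μ, sqrt_pos.mpr hμ, (sq_sqrt hμ.le).symm⟩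
  set s := Icc (0:ℝ) 1
  have hs : UniqueDiffOn ℝ s := uniqueDiffOn_Icc one_pos
  have h0mem : (0 : ℝ) ∈ s := left_mem_Icc.mpr zero_le_one
  have h1mem : (1 : ℝ) ∈ s := right_mem_Icc.mpr zero_le_one
  have hV := (convex_Icc 0 1).eqOn_cos_add_sin_of_hasDerivWithinAt hk.ne'
    (fun x hx ↦ (hu.of_le (by norm_num)).hasDerivWithinAt_iteratedDerivWithin_two_add_mul hs hx)
    (fun x hx ↦ hu.hasDerivWithinAt_iteratedDerivWithin_three_add_mul hs
      (by simpa only [neg_sq] using heq) hx) h1mem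
  have hW := (convex_Icc 0 1).eqOn_cosh_add_sinh_of_hasDerivWithinAt hk.ne'
    (fun x hx ↦ (hu.of_le (by norm_num)).hasDerivWithinAt_iteratedDerivWithin_two_add_mul hs hx)
    (fun x hx ↦ hu.hasDerivWithinAt_iteratedDerivWithin_three_add_mul hs heq hx) h1mem
  have hc : derivWithin u s 1 = 0 := by
    have hV0 := hV h0mem
    have hW0 := hW h0mem
    simp only [h0, h1, h1'', h1''', mul_zero, add_zero, zero_add, zero_mul, zero_sub, mul_neg,
      mul_one, neg_mul, cos_neg, sin_neg, cosh_neg, sinh_neg] at hV0 hW0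
    have : k ^ 2 * derivWithin u s 1 / k * (sinh k + sin k) = 0 := by
      linear_combination hW0 - hV0
    simpa [hk.ne', (sinh_add_sin_pos hk).ne'] using this
  intro x hx
  have hVx := hV hx
  have hWx := hW hx
  simp only [h1, h1'', h1''', hc, mul_zero, add_zero, zero_mul, zero_div, neg_mul] at hVx hWx
  have : k ^ 2 * u x = 0 := by linarith
  simpa [hk.ne'] using this

/-- An eigenfunction of the beam equation `u'''' = μ² u` on `[0,1]`, clamped at `0`
(`u(0) = u'(0) = 0`) and with vanishing value, second and third derivatives at `1`,
is identically zero on `[0,1]`. -/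
theorem beam_vanishing (μ : ℝ) (hμ : 0 < μ) (u : ℝ → ℝ)
    (hu : ContDiffOn ℝ 4 u (Icc 0 1))
    (heq : ∀ x ∈ Icc (0:ℝ) 1, iteratedDerivWithin 4 u (Icc 0 1) x = μ ^ 2 * u x)
    (h0 : u 0 = 0)
    (h0' : derivWithin u (Icc 0 1) 0 = 0)
    (h1 : u 1 = 0)
    (h1'' : iteratedDerivWithin 2 u (Icc 0 1) 1 = 0)
    (h1''' : iteratedDerivWithin 3 u (Icc 0 1) 1 = 0) :
    ∀ x ∈ Icc (0:ℝ) 1, u x = 0 :=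
  beam_vanishing_general μ hμ u hu heq h0 h1 h1'' h1'''
end

section
/- lim_{z→∞} ∫₀¹ ( sin(zx) − sinh(zx) − cos(zx) + cosh(zx) )² dx = 1. -/
/-! With `t = z * x`, `cosh t - sinh t = exp (-t)` turns the integrand into
`(sin t - cos t + exp (-t)) ^ 2 = 1 - sin (2 * t) + exp (-t) * (2 * (sin t - cos t) + exp (-t))`.
The oscillating part integrates to `1 - (1 - cos (2 * z)) / (2 * z) → 1`, and the remainder is
bounded by `5 * exp (-(z * x))`, whose integral over `[0, 1]` is at most `5 / z`. -/

open Real Filter MeasureTheory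

open Topology Set

theorem sq_sin_sub_sinh_sub_cos_add_cosh (t : ℝ) :
    (sin t - sinh t - cos t + cosh t) ^ 2
      = 1 - sin (2 * t) + exp (-t) * (2 * (sin t - cos t) + exp (-t)) := by
  have hexp : cosh t - sinh t = exp (-t) := cosh_sub_sinh t
  linear_combination (2 * (sin t - cos t) + exp (-t) + cosh t - sinh t) * hexp
    + sin_sq_add_cos_sq t + sin_two_mul t

theorem abs_two_mul_sin_sub_cos_add_exp_neg_le {t : ℝ} (ht : 0 ≤ t) :
    |2 * (sin t - cos t) + exp (-t)| ≤ 5 := by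
  have hexp : exp (-t) ≤ 1 := exp_le_one_iff.mpr (neg_nonpos.mpr ht)
  rw [abs_le]
  constructor <;> linarith [neg_one_le_sin t, sin_le_one t, neg_one_le_cos t, cos_le_one t,
    exp_pos (-t)]

theorem integral_sin_mul (b c : ℝ) :
    ∫ x in (0:ℝ)..b, sin (c * x) = (1 - cos (c * b)) / c := by
  rcases eq_or_ne c 0 with rfl | hc
  · simp
  · simp [intervalIntegral.integral_comp_mul_left _ hc, integral_sin, div_eq_inv_mul]

theorem tendsto_integral_sin_mul_atTop (b : ℝ) :
    Tendsto (fun c => ∫ x in (0:ℝ)..b, sin (c * x)) atTop (𝓝 0) := by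
  refine squeeze_zero_norm' ?_ ((tendsto_const_nhds (x := (2:ℝ))).div_atTop tendsto_id)
  filter_upwards [eventually_gt_atTop 0] with c hc
  rw [integral_sin_mul, norm_div, Real.norm_of_nonneg hc.le, id]
  gcongr
  rw [Real.norm_eq_abs, abs_le]
  constructor <;> linarith [neg_one_le_cos (c * b), cos_le_one (c * b)]

theorem integral_exp_neg_mul (b z : ℝ) (hz : z ≠ 0) :
    ∫ x in (0:ℝ)..b, exp (-(z * x)) = (1 - exp (-(z * b))) / z := by
  simpa [div_eq_inv_mul] using
    intervalIntegral.integral_comp_mul_left (a := 0) (b := b) (fun x => exp (-x)) hz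

theorem norm_integral_le_div_of_norm_le_mul_exp_neg {E : Type*} [NormedAddCommGroup E]
    [NormedSpace ℝ E] {f : ℝ → E} {b C z : ℝ} (hb : 0 ≤ b) (hC : 0 ≤ C) (hz : 0 < z)
    (hf : ∀ x ∈ Ioc 0 b, ‖f x‖ ≤ C * exp (-(z * x))) :
    ‖∫ x in (0:ℝ)..b, f x‖ ≤ C / z := by
  calc ‖∫ x in (0:ℝ)..b, f x‖ ≤ ∫ x in (0:ℝ)..b, C * exp (-(z * x)) :=
        intervalIntegral.norm_integral_le_of_norm_le hb (.of_forall hf)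
          ((by fun_prop : Continuous fun x => C * exp (-(z * x))).intervalIntegrable _ _)
    _ = C * (1 - exp (-(z * b))) / z := by
        rw [intervalIntegral.integral_const_mul, integral_exp_neg_mul b z hz.ne', mul_div_assoc]
    _ ≤ C / z := by
        gcongr
        exact mul_le_of_le_one_right hC (sub_le_self _ (exp_pos _).le)

theorem tendsto_integral_of_norm_le_mul_exp_neg {E : Type*} [NormedAddCommGroup E]
    [NormedSpace ℝ E] {f : ℝ → ℝ → E} {b C : ℝ} (hb : 0 ≤ b) (hC : 0 ≤ C)
    (hf : ∀ z > 0, ∀ x ∈ Ioc 0 b, ‖f z x‖ ≤ C * exp (-(z * x))) :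
    Tendsto (fun z => ∫ x in (0:ℝ)..b, f z x) atTop (𝓝 0) := by
  refine squeeze_zero_norm' ?_ ((tendsto_const_nhds (x := C)).div_atTop tendsto_id)
  filter_upwards [eventually_gt_atTop 0] with z hz
  exact norm_integral_le_div_of_norm_le_mul_exp_neg hb hC hz (hf z hz)

/-- `∫₀¹ (sin(zx) − sinh(zx) − cos(zx) + cosh(zx))² dx → 1` as `z → ∞`. -/
theorem beam_integral_limit_one :
    Tendsto
      (fun z : ℝ => ∫ x in (0:ℝ)..1,
        (Real.sin (z * x) - Real.sinh (z * x) - Real.cos (z * x)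
          + Real.cosh (z * x)) ^ 2)
      atTop (nhds 1) := by
  have hsplit : ∀ z : ℝ, ∫ x in (0:ℝ)..1,
      (sin (z * x) - sinh (z * x) - cos (z * x) + cosh (z * x)) ^ 2
      = (1 - ∫ x in (0:ℝ)..1, sin (2 * z * x))
        + ∫ x in (0:ℝ)..1,
            exp (-(z * x)) * (2 * (sin (z * x) - cos (z * x)) + exp (-(z * x))) := by
    intro z
    simp_rw [sq_sin_sub_sinh_sub_cos_add_cosh, ← mul_assoc]
    have hint {f : ℝ → ℝ} (hf : Continuous f) : IntervalIntegrable f volume 0 1 :=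
      hf.intervalIntegrable 0 1
    rw [intervalIntegral.integral_add (hint (by fun_prop)) (hint (by fun_prop)),
      intervalIntegral.integral_sub (hint (by fun_prop)) (hint (by fun_prop))]
    simp
  have hsin : Tendsto (fun z : ℝ => ∫ x in (0:ℝ)..1, sin (2 * z * x)) atTop (𝓝 0) :=
    (tendsto_integral_sin_mul_atTop 1).comp (tendsto_id.const_mul_atTop two_pos)
  have hexp : Tendsto (fun z : ℝ => ∫ x in (0:ℝ)..1,
      exp (-(z * x)) * (2 * (sin (z * x) - cos (z * x)) + exp (-(z * x)))) atTop (𝓝 0) := by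
    refine tendsto_integral_of_norm_le_mul_exp_neg zero_le_one (C := 5) (by norm_num) ?_
    intro z hz x hx
    rw [norm_mul, norm_of_nonneg (exp_pos _).le, mul_comm, Real.norm_eq_abs]
    gcongr
    exact abs_two_mul_sin_sub_cos_add_exp_neg_le (mul_nonneg hz.le hx.1.le)
  simpa [hsplit] using (tendsto_const_nhds.sub hsin).add hexp
end

section
/- Fix α > 0 and set T = 2/(π·√(1+α²)). There exists a constant c > 0, depending only on α, such that for every positive integer k and every pair of functions u ∈ C²(ℝ,ℝ), θ ∈ C¹(ℝ,ℝ) satisfying u''(t) + k⁴π⁴·u(t) − α·k²π²·θ(t) = 0 and θ'(t) + α·k²π²·u'(t) = 0 for all t, one has ∫₀^T θ(t)² dt ≥ c·( k⁴π⁴·u(0)² + u'(0)² + θ(0)² ). -/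
/-!
Since `θ + αK u` is conserved (`K = k²π²`), the mode reduces to a harmonic oscillator with
frequency `ω = K √(1 + α²)`, so `θ = D - P cos ωt - Q sin ωt` with `(D, P, Q)` linear in the
initial data. The window `T` is exactly `k²` periods, hence `∫₀ᵀ θ² = T (D² + (P² + Q²)/2)`,
and this quadratic form dominates `α² / (2 (1 + α²)²)` times the initial energy.
-/

open Real MeasureTheory

theorem eq_zero_of_harmonic_of_initial_eq_zero {ω : ℝ} (hω : ω ≠ 0) {v w : ℝ → ℝ}
    (hv : ∀ t, HasDerivAt v (w t) t) (hw : ∀ t, HasDerivAt w (-ω ^ 2 * v t) t)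
    (hv0 : v 0 = 0) (hw0 : w 0 = 0) (t : ℝ) : v t = 0 := by
  have henergy : ∀ s, HasDerivAt (fun r ↦ w r ^ 2 + ω ^ 2 * v r ^ 2) 0 s := fun s ↦
    (((hw s).fun_pow 2).add (((hv s).fun_pow 2).const_mul (ω ^ 2))).congr_deriv (by ring)
  have hconst : w t ^ 2 + ω ^ 2 * v t ^ 2 = w 0 ^ 2 + ω ^ 2 * v 0 ^ 2 :=
    is_const_of_deriv_eq_zero (fun s ↦ (henergy s).differentiableAt)
      (fun s ↦ (henergy s).deriv) t 0
  rw [hv0, hw0] at hconst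
  have hω2 : 0 < ω ^ 2 := by positivity
  have hvt : v t ^ 2 = 0 := by nlinarith [sq_nonneg (w t), sq_nonneg (v t)]
  simpa using hvt

theorem eq_cos_sin_of_harmonic {ω C : ℝ} (hω : ω ≠ 0) {v v' : ℝ → ℝ}
    (hv : ∀ t, HasDerivAt v (v' t) t) (hv' : ∀ t, HasDerivAt v' (-ω ^ 2 * (v t - C)) t)
    (t : ℝ) : v t = C + (v 0 - C) * cos (ω * t) + v' 0 / ω * sin (ω * t) := by
  set A := v 0 - C
  set B := v' 0 / ω
  have hlin (r : ℝ) : HasDerivAt (fun r ↦ ω * r) ω r := by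
    simpa using (hasDerivAt_id r).const_mul ω
  have hdiff := eq_zero_of_harmonic_of_initial_eq_zero hω
    (v := fun r ↦ v r - C - A * cos (ω * r) - B * sin (ω * r))
    (w := fun r ↦ v' r + A * ω * sin (ω * r) - B * ω * cos (ω * r))
    (fun r ↦ ((((hv r).sub_const C).sub ((hlin r).cos.const_mul A)).sub
      ((hlin r).sin.const_mul B)).congr_deriv (by ring))
    (fun r ↦ (((hv' r).add ((hlin r).sin.const_mul (A * ω))).sub
      ((hlin r).cos.const_mul (B * ω))).congr_deriv (by ring))
    (by simp [A]) (by simp [B, hω]) t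
  linear_combination hdiff

theorem integral_sq_cos_sin_of_mul_eq_nat_mul_two_pi {ω T : ℝ} (hω : ω ≠ 0) {n : ℕ}
    (hT : ω * T = n * (2 * π)) (D P Q : ℝ) :
    ∫ t in (0 : ℝ)..T, (D - P * cos (ω * t) - Q * sin (ω * t)) ^ 2
      = T * (D ^ 2 + (P ^ 2 + Q ^ 2) / 2) := by
  set G : ℝ → ℝ := fun t ↦ (D ^ 2 + (P ^ 2 + Q ^ 2) / 2) * t - 2 * D * P / ω * sin (ω * t)
    + 2 * D * Q / ω * cos (ω * t) + (P ^ 2 - Q ^ 2) / (2 * ω) * (sin (ω * t) * cos (ω * t))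
    + P * Q / ω * sin (ω * t) ^ 2
  have hlin (r : ℝ) : HasDerivAt (fun r ↦ ω * r) ω r := by
    simpa using (hasDerivAt_id r).const_mul ω
  have hG (t : ℝ) : HasDerivAt G ((D - P * cos (ω * t) - Q * sin (ω * t)) ^ 2) t := by
    have h := (((((hasDerivAt_id t).const_mul (D ^ 2 + (P ^ 2 + Q ^ 2) / 2)).sub
      ((hlin t).sin.const_mul (2 * D * P / ω))).add
      ((hlin t).cos.const_mul (2 * D * Q / ω))).add
      (((hlin t).sin.mul (hlin t).cos).const_mul ((P ^ 2 - Q ^ 2) / (2 * ω)))).add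
      (((hlin t).sin.pow 2).const_mul (P * Q / ω))
    refine h.congr_deriv ?_
    field_simp
    linear_combination (-(P ^ 2 + Q ^ 2)) * sin_sq_add_cos_sq (ω * t)
  have hsin : sin (ω * T) = 0 := by rw [hT, sin_periodic.nat_mul_eq, sin_zero]
  have hcos : cos (ω * T) = 1 := by rw [hT, cos_periodic.nat_mul_eq, cos_zero]
  rw [intervalIntegral.integral_eq_sub_of_hasDerivAt (fun t _ ↦ hG t)
    (Continuous.intervalIntegrable (by fun_prop) 0 T)]
  simp only [G, hsin, hcos, mul_zero, sin_zero, cos_zero]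
  ring

theorem thermoelastic_mode_conserved {α K : ℝ} {u u' θ : ℝ → ℝ}
    (hu : ∀ t, HasDerivAt u (u' t) t) (hθ : ∀ t, HasDerivAt θ (-(α * K * u' t)) t) (t : ℝ) :
    θ t + α * K * u t = θ 0 + α * K * u 0 := by
  have hE (s : ℝ) : HasDerivAt (fun r ↦ θ r + α * K * u r) 0 s :=
    ((hθ s).add ((hu s).const_mul (α * K))).congr_deriv (by ring)
  exact is_const_of_deriv_eq_zero (fun s ↦ (hE s).differentiableAt) (fun s ↦ (hE s).deriv) t 0

theorem thermoelastic_mode_eq_cos_sin {α K : ℝ} (hK : K ≠ 0) {u u' θ : ℝ → ℝ}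
    (hu : ∀ t, HasDerivAt u (u' t) t)
    (hu' : ∀ t, HasDerivAt u' (α * K * θ t - K ^ 2 * u t) t)
    (hθ : ∀ t, HasDerivAt θ (-(α * K * u' t)) t) (t : ℝ) :
    θ t = (θ 0 + α * K * u 0) / (1 + α ^ 2)
      - α * (K * u 0 - α * θ 0) / (1 + α ^ 2) * cos (K * √(1 + α ^ 2) * t)
      - α * u' 0 / √(1 + α ^ 2) * sin (K * √(1 + α ^ 2) * t) := by
  have hα : 0 < 1 + α ^ 2 := by positivity
  have hs : √(1 + α ^ 2) ^ 2 = 1 + α ^ 2 := sq_sqrt hα.le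
  have hs0 : √(1 + α ^ 2) ≠ 0 := (sqrt_pos.2 hα).ne'
  have hcons := thermoelastic_mode_conserved hu hθ
  obtain ⟨C, hC⟩ : ∃ C, C = α * (θ 0 + α * K * u 0) / (K * (1 + α ^ 2)) := ⟨_, rfl⟩
  have hu'' (r : ℝ) : HasDerivAt u' (-(K * √(1 + α ^ 2)) ^ 2 * (u r - C)) r := by
    refine (hu' r).congr_deriv ?_
    rw [mul_pow, hs, hC]
    field_simp
    linear_combination α * hcons r
  have hu_eq := eq_cos_sin_of_harmonic (mul_ne_zero hK hs0) hu hu'' t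
  rw [show θ t = θ 0 + α * K * u 0 - α * K * u t by linear_combination hcons t, hu_eq, hC]
  field_simp
  ring

theorem thermoelastic_energy_le (α x y z : ℝ) :
    α ^ 2 / (2 * (1 + α ^ 2) ^ 2) * (x ^ 2 + y ^ 2 + z ^ 2)
      ≤ ((z + α * x) / (1 + α ^ 2)) ^ 2
        + ((α * (x - α * z) / (1 + α ^ 2)) ^ 2 + (α * y / √(1 + α ^ 2)) ^ 2) / 2 := by
  have hα : 0 < 1 + α ^ 2 := by positivity
  rw [div_pow (α * y), sq_sqrt hα.le]
  field_simp
  -- `(z + αx)² + (x - αz)² = (1 + α²)(x² + z²)`, and both `2` and `α²` are `≥ α² / (1 + α²)`.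
  nlinarith [sq_nonneg (z + α * x), sq_nonneg (α ^ 2 * y), sq_nonneg (α ^ 2 * (x - α * z))]

/-- Fourier-mode observability estimate for the conservative thermoelastic beam system:
if `u'' + k⁴π⁴ u − α k²π² θ = 0` and `θ' + α k²π² u' = 0`, then with
`T = 2/(π√(1+α²))`, `∫₀ᵀ θ² ≥ c (k⁴π⁴ u(0)² + u'(0)² + θ(0)²)` with `c > 0`
depending only on `α`. -/
theorem thermoelastic_mode_observability (α : ℝ) (hα : 0 < α)
    (T : ℝ) (hT : T = 2 / (π * Real.sqrt (1 + α ^ 2))) :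
    ∃ c > (0:ℝ), ∀ (k : ℕ), 1 ≤ k → ∀ (u θ : ℝ → ℝ),
      ContDiff ℝ 2 u → ContDiff ℝ 1 θ →
      (∀ t : ℝ, iteratedDeriv 2 u t + (k : ℝ) ^ 4 * π ^ 4 * u t
          - α * (k : ℝ) ^ 2 * π ^ 2 * θ t = 0) →
      (∀ t : ℝ, deriv θ t + α * (k : ℝ) ^ 2 * π ^ 2 * deriv u t = 0) →
      (∫ t in (0:ℝ)..T, (θ t) ^ 2)
        ≥ c * ((k : ℝ) ^ 4 * π ^ 4 * (u 0) ^ 2 + (deriv u 0) ^ 2 + (θ 0) ^ 2) := by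
  have hs : 0 < √(1 + α ^ 2) := sqrt_pos.2 (by positivity)
  have hT0 : 0 < T := by rw [hT]; positivity
  refine ⟨T * (α ^ 2 / (2 * (1 + α ^ 2) ^ 2)), by positivity, ?_⟩
  intro k hk u θ hu hθ hode hcoupling
  have hK : (k : ℝ) ^ 2 * π ^ 2 ≠ 0 := by positivity
  have hu1 : Differentiable ℝ u := hu.differentiable (by norm_num)
  have hu2 : Differentiable ℝ (deriv u) := by
    simpa using hu.differentiable_iteratedDeriv 1 (by norm_num)
  have hθ1 : Differentiable ℝ θ := hθ.differentiable (by norm_num)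
  simp only [iteratedDeriv_succ, iteratedDeriv_zero] at hode
  have hθ_eq := thermoelastic_mode_eq_cos_sin (α := α) hK (fun t ↦ (hu1 t).hasDerivAt)
    (fun t ↦ (hu2 t).hasDerivAt.congr_deriv (by linear_combination hode t))
    (fun t ↦ (hθ1 t).hasDerivAt.congr_deriv (by linear_combination hcoupling t))
  have hperiod : (k : ℝ) ^ 2 * π ^ 2 * √(1 + α ^ 2) * T = ((k ^ 2 : ℕ) : ℝ) * (2 * π) := by
    rw [hT]; field_simp; push_cast; ring
  rw [intervalIntegral.integral_congr (fun t _ ↦ by rw [hθ_eq t]),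
    integral_sq_cos_sin_of_mul_eq_nat_mul_two_pi (by positivity) hperiod, ge_iff_le,
    mul_assoc T,
    show (k : ℝ) ^ 4 * π ^ 4 * u 0 ^ 2 = ((k : ℝ) ^ 2 * π ^ 2 * u 0) ^ 2 by ring]
  refine mul_le_mul_of_nonneg_left ((thermoelastic_energy_le α _ _ _).trans_eq ?_) hT0.le
  ring
end

section
/- Fix α > 0 and set T = 2/(π·√(1+α²)). There exists a constant c > 0, depending only on α, such that the following holds: for all real sequences (a_k)_{k≥1}, (b_k)_{k≥1}, (c_k)_{k≥1} with ∑_k k⁴ a_k² < ∞, ∑_k b_k² < ∞ and ∑_k c_k² < ∞, if for each k ≥ 1 the functions u_k ∈ C²(ℝ,ℝ) and θ_k ∈ C¹(ℝ,ℝ) satisfy u_k''(t) + k⁴π⁴ u_k(t) − α k²π² θ_k(t) = 0, θ_k'(t) + α k²π² u_k'(t) = 0, u_k(0) = a_k, u_k'(0) = b_k, θ_k(0) = c_k, then ∫₀^T ( ∑_{k=1}^∞ θ_k(t)² ) dt ≥ c · ∑_{k=1}^∞ ( k⁴π⁴ a_k² + b_k² + c_k² ). -/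
open Real MeasureTheory

/-!
Each mode decouples: `θ + α μ u` is conserved, so `θ` alone is a harmonic oscillator of frequency
`μ √(1 + α²)`, and for `μ = (k + 1)² π²` all these frequencies are integer multiples of `2π / T`.
Over a full period the mean of `(C + D cos + E sin)²` is `C² + (D² + E²) / 2`, which dominates
`α² / (2 (1 + α²)²)` times the energy of the mode. Conservation of the energy
`μ² u² + u'² + θ²` bounds `θ_k²` uniformly by the energy of the mode, so `∑ θ_k²` converges
uniformly and the modewise inequalities can be summed under the integral.
-/

lemma eq_of_hasDerivAt_zero {f : ℝ → ℝ} (hf : ∀ t, HasDerivAt f 0 t) (t : ℝ) : f t = f 0 :=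
  is_const_of_deriv_eq_zero (fun x => (hf x).differentiableAt) (fun x => (hf x).deriv) t 0

lemma eq_zero_of_hasDerivAt_harmonic {ω : ℝ} {w v : ℝ → ℝ} (hω : ω ≠ 0)
    (hw : ∀ t, HasDerivAt w (v t) t) (hv : ∀ t, HasDerivAt v (-(ω ^ 2 * w t)) t)
    (hw0 : w 0 = 0) (hv0 : v 0 = 0) (t : ℝ) : w t = 0 := by
  have henergy : ∀ t, HasDerivAt (fun t => v t ^ 2 + ω ^ 2 * w t ^ 2) 0 t := fun t => by
    refine (((hv t).pow 2).add (((hw t).pow 2).const_mul (ω ^ 2))).congr_deriv ?_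
    push_cast
    ring
  have h := eq_of_hasDerivAt_zero henergy t
  simp only [hw0, hv0] at h
  have : w t ^ 2 = 0 := by
    nlinarith [sq_nonneg (v t), sq_nonneg (w t), sq_pos_of_ne_zero hω]
  exact pow_eq_zero_iff two_ne_zero |>.mp this

lemma hasDerivAt_cos_mul (ω t : ℝ) :
    HasDerivAt (fun t => cos (ω * t)) (-(ω * sin (ω * t))) t := by
  simpa [mul_comm] using ((hasDerivAt_id t).const_mul ω).cos

lemma hasDerivAt_sin_mul (ω t : ℝ) : HasDerivAt (fun t => sin (ω * t)) (ω * cos (ω * t)) t := by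
  simpa [mul_comm] using ((hasDerivAt_id t).const_mul ω).sin

lemma harmonic_oscillator_eq {ω p : ℝ} {f f' : ℝ → ℝ} (hω : ω ≠ 0)
    (hf : ∀ t, HasDerivAt f (f' t) t) (hf' : ∀ t, HasDerivAt f' (ω ^ 2 * (p - f t)) t)
    (t : ℝ) : f t = p + (f 0 - p) * cos (ω * t) + f' 0 / ω * sin (ω * t) := by
  set A := f 0 - p
  set B := f' 0 / ω
  have hw : ∀ t, HasDerivAt (fun t => f t - (p + A * cos (ω * t) + B * sin (ω * t)))
      (f' t - (-(A * ω * sin (ω * t)) + B * ω * cos (ω * t))) t := fun t => by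
    refine ((hf t).sub ((((hasDerivAt_cos_mul ω t).const_mul A).const_add p).add
      ((hasDerivAt_sin_mul ω t).const_mul B))).congr_deriv ?_
    ring
  have hv : ∀ t, HasDerivAt (fun t => f' t - (-(A * ω * sin (ω * t)) + B * ω * cos (ω * t)))
      (-(ω ^ 2 * (f t - (p + A * cos (ω * t) + B * sin (ω * t))))) t := fun t => by
    refine ((hf' t).sub (((hasDerivAt_sin_mul ω t).const_mul (A * ω)).neg.add
      ((hasDerivAt_cos_mul ω t).const_mul (B * ω)))).congr_deriv ?_
    ring
  have := eq_zero_of_hasDerivAt_harmonic hω hw hv (by simp [A]) (by simp [B, hω]) t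
  linarith

lemma integral_sq_cos_sin_of_period {ω T : ℝ} (C D E : ℝ) (hω : ω ≠ 0)
    (hT : ∃ n : ℕ, ω * T = n * (2 * π)) :
    ∫ t in (0 : ℝ)..T, (C + D * cos (ω * t) + E * sin (ω * t)) ^ 2
      = T * (C ^ 2 + (D ^ 2 + E ^ 2) / 2) := by
  obtain ⟨n, hn⟩ := hT
  have hcos : cos (ω * T) = 1 := by rw [hn, cos_nat_mul_two_pi]
  have hsin : sin (ω * T) = 0 := by rw [hn, sin_periodic.nat_mul_eq, sin_zero]
  set Φ : ℝ → ℝ := fun t => (C ^ 2 + (D ^ 2 + E ^ 2) / 2) * t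
    + (2 * C * D * sin (ω * t) - 2 * C * E * cos (ω * t)) / ω
    + ((D ^ 2 - E ^ 2) * sin (ω * t) * cos (ω * t) - 2 * D * E * cos (ω * t) ^ 2) / (2 * ω)
  have hΦ : ∀ t, HasDerivAt Φ ((C + D * cos (ω * t) + E * sin (ω * t)) ^ 2) t := fun t => by
    have h := (((hasDerivAt_id t).const_mul (C ^ 2 + (D ^ 2 + E ^ 2) / 2)).add
      ((((hasDerivAt_sin_mul ω t).const_mul (2 * C * D)).sub
        ((hasDerivAt_cos_mul ω t).const_mul (2 * C * E))).div_const ω)).add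
      (((((hasDerivAt_sin_mul ω t).const_mul (D ^ 2 - E ^ 2)).mul (hasDerivAt_cos_mul ω t)).sub
        (((hasDerivAt_cos_mul ω t).pow 2).const_mul (2 * D * E))).div_const (2 * ω))
    refine h.congr_deriv ?_
    field_simp
    linear_combination (-(D ^ 2 + E ^ 2)) * sin_sq_add_cos_sq (ω * t)
  rw [intervalIntegral.integral_eq_sub_of_hasDerivAt (fun t _ => hΦ t)
    (Continuous.intervalIntegrable (by fun_prop) _ _)]
  simp only [Φ, hcos, hsin, mul_zero, sin_zero, cos_zero]
  field_simp
  ring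

lemma tsum_le_integral_tsum {ι : Type*} {f : ι → ℝ → ℝ} {g c : ι → ℝ} {a b : ℝ} (hab : a ≤ b)
    (hf : ∀ i, Continuous (f i)) (hf0 : ∀ i t, 0 ≤ f i t) (hfg : ∀ i t, f i t ≤ g i)
    (hg : Summable g) (hc : ∀ i, c i ≤ ∫ t in a..b, f i t) :
    ∑' i, c i ≤ ∫ t in a..b, ∑' i, f i t := by
  have hsum : Continuous fun t => ∑' i, f i t :=
    continuous_tsum hf hg fun i t => by rw [Real.norm_of_nonneg (hf0 i t)]; exact hfg i t
  refine tsum_le_of_sum_le' (intervalIntegral.integral_nonneg hab fun t _ => tsum_nonneg (hf0 · t))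
    fun s => ?_
  calc ∑ i ∈ s, c i ≤ ∑ i ∈ s, ∫ t in a..b, f i t := Finset.sum_le_sum fun i _ => hc i
    _ = ∫ t in a..b, ∑ i ∈ s, f i t :=
      (intervalIntegral.integral_finsetSum fun i _ => (hf i).intervalIntegrable a b).symm
    _ ≤ ∫ t in a..b, ∑' i, f i t :=
      intervalIntegral.integral_mono_on hab
        ((continuous_finsetSum s fun i _ => hf i).intervalIntegrable a b)
        (hsum.intervalIntegrable a b) fun t _ =>
        (hg.of_nonneg_of_le (hf0 · t) (hfg · t)).sum_le_tsum s fun i _ => hf0 i t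

lemma thermoelastic_coeff_bound (α X Y B : ℝ) :
    α ^ 2 / (2 * (1 + α ^ 2) ^ 2) * (X ^ 2 + B ^ 2 + Y ^ 2)
      ≤ ((Y + α * X) / (1 + α ^ 2)) ^ 2
        + ((Y - (Y + α * X) / (1 + α ^ 2)) ^ 2 + α ^ 2 * B ^ 2 / (1 + α ^ 2)) / 2 := by
  have h : 0 < 1 + α ^ 2 := by positivity
  rw [div_mul_eq_mul_div, div_le_iff₀ (by positivity)]
  field_simp
  nlinarith [sq_nonneg (α * X + (2 - α ^ 2) * Y / 2), sq_nonneg (α * Y), sq_nonneg (α ^ 2 * Y),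
    sq_nonneg (α ^ 2 * B), sq_nonneg (α * B)]

/-- The Fourier mode `sin (kπx)` of the beam system, with `μ = k²π²` and `u'` standing for `u_t`. -/
structure IsThermoelasticMode (α μ : ℝ) (u u' θ : ℝ → ℝ) : Prop where
  hasDerivAt_u : ∀ t, HasDerivAt u (u' t) t
  hasDerivAt_u' : ∀ t, HasDerivAt u' (α * μ * θ t - μ ^ 2 * u t) t
  hasDerivAt_θ : ∀ t, HasDerivAt θ (-(α * μ * u' t)) t

namespace IsThermoelasticMode

variable {α μ : ℝ} {u u' θ : ℝ → ℝ}

lemma of_contDiff (hu : ContDiff ℝ 2 u) (hθ : ContDiff ℝ 1 θ)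
    (h₁ : ∀ t, iteratedDeriv 2 u t + μ ^ 2 * u t - α * μ * θ t = 0)
    (h₂ : ∀ t, deriv θ t + α * μ * deriv u t = 0) :
    IsThermoelasticMode α μ u (deriv u) θ where
  hasDerivAt_u t := (hu.differentiable two_ne_zero t).hasDerivAt
  hasDerivAt_u' t := by
    have h := ((hu.differentiable_iteratedDeriv 1 (by norm_num)) t).hasDerivAt
    rw [← iteratedDeriv_succ, iteratedDeriv_one] at h
    exact h.congr_deriv (by linear_combination h₁ t)
  hasDerivAt_θ t := ((hθ.differentiable one_ne_zero) t).hasDerivAt.congr_deriv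
    (by linear_combination h₂ t)

lemma θ_add_mul_u_eq (h : IsThermoelasticMode α μ u u' θ) (t : ℝ) :
    θ t + α * μ * u t = θ 0 + α * μ * u 0 :=
  eq_of_hasDerivAt_zero (fun t =>
    ((h.hasDerivAt_θ t).add ((h.hasDerivAt_u t).const_mul _)).congr_deriv (by ring)) t

lemma energy_eq (h : IsThermoelasticMode α μ u u' θ) (t : ℝ) :
    μ ^ 2 * u t ^ 2 + u' t ^ 2 + θ t ^ 2 = μ ^ 2 * u 0 ^ 2 + u' 0 ^ 2 + θ 0 ^ 2 :=
  eq_of_hasDerivAt_zero (fun t => ((((h.hasDerivAt_u t).pow 2).const_mul _).add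
    ((h.hasDerivAt_u' t).pow 2) |>.add ((h.hasDerivAt_θ t).pow 2)).congr_deriv
      (by push_cast; ring)) t

lemma sq_θ_le (h : IsThermoelasticMode α μ u u' θ) (t : ℝ) :
    θ t ^ 2 ≤ μ ^ 2 * u 0 ^ 2 + u' 0 ^ 2 + θ 0 ^ 2 := by
  rw [← h.energy_eq t]
  nlinarith [sq_nonneg (μ * u t), sq_nonneg (u' t)]

lemma θ_eq_harmonic (h : IsThermoelasticMode α μ u u' θ) (hμ : μ ≠ 0) (t : ℝ) :
    θ t = (θ 0 + α * μ * u 0) / (1 + α ^ 2)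
      + (θ 0 - (θ 0 + α * μ * u 0) / (1 + α ^ 2)) * cos (μ * √(1 + α ^ 2) * t)
      + -(α * μ * u' 0) / (μ * √(1 + α ^ 2)) * sin (μ * √(1 + α ^ 2) * t) := by
  refine harmonic_oscillator_eq (mul_ne_zero hμ (by positivity)) h.hasDerivAt_θ (fun t => ?_) t
  refine ((h.hasDerivAt_u' t).const_mul (α * μ)).neg.congr_deriv ?_
  rw [mul_pow, sq_sqrt (by positivity), ← h.θ_add_mul_u_eq t]
  field_simp
  ring

lemma le_integral_sq_θ (h : IsThermoelasticMode α μ u u' θ) (hμ : μ ≠ 0) {T : ℝ} (hT : 0 ≤ T)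
    (hperiod : ∃ n : ℕ, μ * √(1 + α ^ 2) * T = n * (2 * π)) :
    α ^ 2 * T / (2 * (1 + α ^ 2) ^ 2) * (μ ^ 2 * u 0 ^ 2 + u' 0 ^ 2 + θ 0 ^ 2)
      ≤ ∫ t in (0 : ℝ)..T, θ t ^ 2 := by
  rw [intervalIntegral.integral_congr fun t _ => congrArg (· ^ 2) (h.θ_eq_harmonic hμ t),
    integral_sq_cos_sin_of_period _ _ _ (mul_ne_zero hμ (by positivity)) hperiod]
  have hE : (-(α * μ * u' 0) / (μ * √(1 + α ^ 2))) ^ 2 = α ^ 2 * u' 0 ^ 2 / (1 + α ^ 2) := by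
    field_simp
    rw [sq_sqrt (by positivity)]
  rw [hE]
  calc α ^ 2 * T / (2 * (1 + α ^ 2) ^ 2) * (μ ^ 2 * u 0 ^ 2 + u' 0 ^ 2 + θ 0 ^ 2)
      = T * (α ^ 2 / (2 * (1 + α ^ 2) ^ 2) * ((μ * u 0) ^ 2 + u' 0 ^ 2 + θ 0 ^ 2)) := by ring
    _ ≤ _ := mul_le_mul_of_nonneg_left (by
        simpa only [mul_assoc] using thermoelastic_coeff_bound α (μ * u 0) (θ 0) (u' 0)) hT

end IsThermoelasticMode

/-- Observability inequality for the conservative thermoelastic beam system, expressed on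
Fourier coefficients. Sequences indexed by `k ≥ 1` are represented as functions of
`k : ℕ` evaluated at mode number `k + 1`. -/
theorem thermoelastic_observability (α : ℝ) (hα : 0 < α)
    (T : ℝ) (hT : T = 2 / (π * Real.sqrt (1 + α ^ 2))) :
    ∃ c > (0:ℝ), ∀ (a b d : ℕ → ℝ) (u θ : ℕ → ℝ → ℝ),
      Summable (fun k : ℕ => ((k : ℝ) + 1) ^ 4 * (a k) ^ 2) →
      Summable (fun k : ℕ => (b k) ^ 2) →
      Summable (fun k : ℕ => (d k) ^ 2) →
      (∀ k : ℕ, ContDiff ℝ 2 (u k)) →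
      (∀ k : ℕ, ContDiff ℝ 1 (θ k)) →
      (∀ (k : ℕ) (t : ℝ),
        iteratedDeriv 2 (u k) t + ((k : ℝ) + 1) ^ 4 * π ^ 4 * u k t
          - α * ((k : ℝ) + 1) ^ 2 * π ^ 2 * θ k t = 0) →
      (∀ (k : ℕ) (t : ℝ),
        deriv (θ k) t + α * ((k : ℝ) + 1) ^ 2 * π ^ 2 * deriv (u k) t = 0) →
      (∀ k : ℕ, u k 0 = a k ∧ deriv (u k) 0 = b k ∧ θ k 0 = d k) →
      (∫ t in (0:ℝ)..T, ∑' k : ℕ, (θ k t) ^ 2)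
        ≥ c * ∑' k : ℕ,
            (((k : ℝ) + 1) ^ 4 * π ^ 4 * (a k) ^ 2 + (b k) ^ 2 + (d k) ^ 2) := by
  have hT0 : 0 < T := by rw [hT]; positivity
  refine ⟨α ^ 2 * T / (2 * (1 + α ^ 2) ^ 2), by positivity, ?_⟩
  intro a b d u θ ha hb hd hu hθ hode₁ hode₂ hinit
  have hmode (k : ℕ) :
      IsThermoelasticMode α (((k : ℝ) + 1) ^ 2 * π ^ 2) (u k) (deriv (u k)) (θ k) :=
    .of_contDiff (hu k) (hθ k) (fun t => by linear_combination hode₁ k t)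
      (fun t => by linear_combination hode₂ k t)
  have henergy (k : ℕ) : ((k : ℝ) + 1) ^ 4 * π ^ 4 * a k ^ 2 + b k ^ 2 + d k ^ 2
      = (((k : ℝ) + 1) ^ 2 * π ^ 2) ^ 2 * u k 0 ^ 2 + deriv (u k) 0 ^ 2 + θ k 0 ^ 2 := by
    obtain ⟨h₁, h₂, h₃⟩ := hinit k
    rw [h₁, h₂, h₃]
    ring
  have hμ (k : ℕ) : ((k : ℝ) + 1) ^ 2 * π ^ 2 ≠ 0 := by positivity
  rw [ge_iff_le, ← tsum_mul_left]
  refine tsum_le_integral_tsum hT0.le (fun k => (hθ k).continuous.pow 2) (fun k t => sq_nonneg _)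
    (fun k t => (henergy k).symm ▸ (hmode k).sq_θ_le t)
    (((ha.mul_left (π ^ 4)).add hb).add hd |>.congr fun k => by ring) fun k => ?_
  rw [henergy]
  refine (hmode k).le_integral_sq_θ (hμ k) hT0.le ⟨(k + 1) ^ 2, ?_⟩
  rw [hT]
  push_cast
  field_simp
end

section
/- Let μ be a real number with μ ≠ 0 and μ ≠ 1. There exists a four times continuously differentiable function u : [0,1] → ℂ, not identically zero, satisfying u''''(x) + (μ² − μ)·u''(x) + (μ − μ³)·u(x) = 0 on [0,1] with boundary conditions u(0) = u(1) = 0 and u''(0) = u''(1) = 0, if and only if there exists a positive integer k such that k⁴π⁴ − (μ² − μ)·k²π² + (μ − μ³) = 0. -/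
open Real Set

/-!
Factor `X² + A X + B = (X - X₁)(X - X₂)`. For a hinged solution `u` of `u'''' + A u'' + B u = 0`,
either `u'' = X₂ u`, or `v = u'' - X₂ u` is a nonzero solution of `v'' = X₁ v` vanishing at both
ends; so some root `X` is a Dirichlet eigenvalue of `d²/dx²` on `[0,1]`, i.e. `X = -(kπ)²`.
That eigenvalue fact comes from the two first integrals `(v' ∓ r v) e^{± r x}` of `v'' = r² v`,
which give `2 r v(x) = v'(0) (e^{r x} - e^{-r x})` and hence `e^{2r} = 1`.
Conversely `sin (kπx)` is a solution as soon as `-(kπ)²` is a root.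
-/

theorem constant_of_hasDerivWithinAt_zero {E : Type*} [NormedAddCommGroup E] [NormedSpace ℝ E]
    {f : ℝ → E} {a b : ℝ} (hf : ∀ x ∈ Icc a b, HasDerivWithinAt f 0 (Icc a b) x) :
    ∀ x ∈ Icc a b, f x = f a := by
  simpa only [zero_mul, norm_le_zero_iff, sub_eq_zero] using
    norm_image_sub_le_of_norm_deriv_le_segment' hf fun _ _ => norm_zero.le

theorem ContDiffOn.hasDerivWithinAt_iteratedDerivWithin_s10 {𝕜 F : Type*} [NontriviallyNormedField 𝕜]
    [NormedAddCommGroup F] [NormedSpace 𝕜 F] {f : 𝕜 → F} {s : Set 𝕜} {x : 𝕜} {n : WithTop ℕ∞}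
    {m : ℕ}
    (hf : ContDiffOn 𝕜 n f s) (hmn : m < n) (hs : UniqueDiffOn 𝕜 s) (hx : x ∈ s) :
    HasDerivWithinAt (iteratedDerivWithin m f s) (iteratedDerivWithin (m + 1) f s x) s x := by
  rw [iteratedDerivWithin_succ]
  exact (hf.differentiableOn_iteratedDerivWithin hmn hs x hx).hasDerivWithinAt

theorem iteratedDerivWithin_two_mul_eq_pow_mul {𝕜 𝔸 : Type*} [NontriviallyNormedField 𝕜]
    [NormedRing 𝔸] [NormedAlgebra 𝕜 𝔸] {f g : 𝕜 → 𝔸} {s : Set 𝕜} {X : 𝔸}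
    (hs : UniqueDiffOn 𝕜 s) (hf : ∀ x, HasDerivAt f (g x) x) (hg : ∀ x, HasDerivAt g (X * f x) x)
    (m : ℕ) : ∀ x ∈ s, iteratedDerivWithin (2 * m) f s x = X ^ m * f x := by
  suffices ∀ x ∈ s, iteratedDerivWithin (2 * m) f s x = X ^ m * f x ∧
      iteratedDerivWithin (2 * m + 1) f s x = X ^ m * g x from fun x hx => (this x hx).1
  induction m with
  | zero =>
    intro x hx
    simp [iteratedDerivWithin_one, (hf x).hasDerivWithinAt.derivWithin (hs x hx)]
  | succ m ih =>
    have hsucc : ∀ {h d : 𝕜 → 𝔸} {n : ℕ}, (∀ x ∈ s, iteratedDerivWithin n f s x = h x) →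
        (∀ x, HasDerivAt h (d x) x) → ∀ x ∈ s, iteratedDerivWithin (n + 1) f s x = d x := by
      intro h d n hn hh x hx
      rw [iteratedDerivWithin_succ, derivWithin_congr hn (hn x hx)]
      exact (hh x).hasDerivWithinAt.derivWithin (hs x hx)
    have heven : ∀ x ∈ s, iteratedDerivWithin (2 * (m + 1)) f s x = X ^ (m + 1) * f x := by
      simpa only [pow_succ, mul_assoc, mul_add, mul_one] using
        hsucc (fun x hx => (ih x hx).2) fun x => (hg x).const_mul (X ^ m)
    exact fun x hx => ⟨heven x hx, hsucc heven (fun x => (hf x).const_mul (X ^ (m + 1))) x hx⟩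

theorem hasDerivAt_cexp_mul_ofReal (r : ℂ) (x : ℝ) :
    HasDerivAt (fun y : ℝ => Complex.exp (r * y)) (r * Complex.exp (r * x)) x := by
  simpa [mul_comm] using ((hasDerivAt_id x).ofReal_comp.const_mul r).cexp

section Dirichlet

variable {v w : ℝ → ℂ}

theorem sub_mul_mul_exp_eq_of_hasDerivWithinAt {a b : ℝ} {r : ℂ}
    (hv : ∀ x ∈ Icc a b, HasDerivWithinAt v (w x) (Icc a b) x)
    (hw : ∀ x ∈ Icc a b, HasDerivWithinAt w (r ^ 2 * v x) (Icc a b) x) :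
    ∀ x ∈ Icc a b, (w x - r * v x) * Complex.exp (r * x) =
      (w a - r * v a) * Complex.exp (r * a) := by
  refine constant_of_hasDerivWithinAt_zero fun x hx => ?_
  refine (((hw x hx).sub ((hv x hx).const_mul r)).mul
    (hasDerivAt_cexp_mul_ofReal r x).hasDerivWithinAt).congr_deriv ?_
  simp only [Pi.sub_apply]
  ring

theorem eq_zero_of_hasDerivWithinAt_zero
    (hv : ∀ x ∈ Icc (0 : ℝ) 1, HasDerivWithinAt v (w x) (Icc 0 1) x)
    (hw : ∀ x ∈ Icc (0 : ℝ) 1, HasDerivWithinAt w 0 (Icc 0 1) x) (h0 : v 0 = 0) (h1 : v 1 = 0) :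
    ∀ x ∈ Icc (0 : ℝ) 1, v x = 0 := by
  have hwc := constant_of_hasDerivWithinAt_zero hw
  have hlin : ∀ x ∈ Icc (0 : ℝ) 1, v x - w 0 * x = 0 := by
    have := constant_of_hasDerivWithinAt_zero (f := fun x : ℝ => v x - w 0 * x) fun x hx => by
      refine ((hv x hx).sub ((hasDerivAt_id x).ofReal_comp.const_mul (w 0)).hasDerivWithinAt
        ).congr_deriv ?_
      simp [hwc x hx]
    simpa [h0] using this
  have hw0 : w 0 = 0 := by simpa [h1] using hlin 1 (by norm_num)
  intro x hx
  simpa [hw0] using hlin x hx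

theorem two_mul_mul_eq_of_hasDerivWithinAt {r : ℂ}
    (hv : ∀ x ∈ Icc (0 : ℝ) 1, HasDerivWithinAt v (w x) (Icc 0 1) x)
    (hw : ∀ x ∈ Icc (0 : ℝ) 1, HasDerivWithinAt w (r ^ 2 * v x) (Icc 0 1) x) (h0 : v 0 = 0) :
    ∀ x ∈ Icc (0 : ℝ) 1, 2 * r * v x = w 0 * (Complex.exp (r * x) - Complex.exp (-r * x)) := by
  intro x hx
  have hplus := sub_mul_mul_exp_eq_of_hasDerivWithinAt hv hw x hx
  have hminus := sub_mul_mul_exp_eq_of_hasDerivWithinAt hv (r := -r) (by simpa using hw) x hx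
  have hinv : Complex.exp (r * x) * Complex.exp (-r * x) = 1 := by
    rw [← Complex.exp_add]; simp
  simp only [h0, mul_zero, sub_zero, Complex.ofReal_zero, Complex.exp_zero, mul_one] at hplus hminus
  linear_combination Complex.exp (r * x) * hminus - Complex.exp (-r * x) * hplus
    - 2 * r * v x * hinv

theorem exists_nat_eq_neg_sq_of_hasDerivWithinAt {X : ℂ}
    (hv : ∀ x ∈ Icc (0 : ℝ) 1, HasDerivWithinAt v (w x) (Icc 0 1) x)
    (hw : ∀ x ∈ Icc (0 : ℝ) 1, HasDerivWithinAt w (X * v x) (Icc 0 1) x) (h0 : v 0 = 0)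
    (h1 : v 1 = 0) (hne : ∃ x ∈ Icc (0 : ℝ) 1, v x ≠ 0) :
    ∃ k : ℕ, 1 ≤ k ∧ X = -((k : ℂ) * π) ^ 2 := by
  obtain ⟨r, rfl⟩ : ∃ r : ℂ, r ^ 2 = X := IsAlgClosed.exists_pow_nat_eq X two_pos
  obtain ⟨x₀, hx₀, hvx₀⟩ := hne
  have hr : r ≠ 0 := by
    rintro rfl
    exact hvx₀ (eq_zero_of_hasDerivWithinAt_zero hv (by simpa using hw) h0 h1 x₀ hx₀)
  have hsol := two_mul_mul_eq_of_hasDerivWithinAt hv hw h0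
  have hw0 : w 0 ≠ 0 := by
    intro hw0
    simpa [hr, hvx₀, hw0] using hsol x₀ hx₀
  have hexp : Complex.exp (2 * r) = 1 := by
    have hsinh : Complex.exp r = Complex.exp (-r) := by
      simpa [h1, hw0, sub_eq_zero, eq_comm] using hsol 1 (by norm_num)
    rw [two_mul, Complex.exp_add]
    nth_rw 1 [hsinh]
    rw [← Complex.exp_add, neg_add_cancel, Complex.exp_zero]
  obtain ⟨n, hn⟩ := Complex.exp_eq_one_iff.1 hexp
  have hrn : r = n * π * Complex.I := by linear_combination hn / 2
  refine ⟨n.natAbs, Int.natAbs_pos.2 fun h => hr (by simp [hrn, h]), ?_⟩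
  have hcast : ((n.natAbs : ℂ)) ^ 2 = (n : ℂ) ^ 2 := by
    rw [← Int.cast_natCast, ← Int.cast_pow, Int.natAbs_sq, Int.cast_pow]
  rw [hrn]
  linear_combination (n : ℂ) ^ 2 * (π : ℂ) ^ 2 * Complex.I_sq + (π : ℂ) ^ 2 * hcast

end Dirichlet

def IsHingedEigenfunction (A B : ℂ) (u : ℝ → ℂ) : Prop :=
  ContDiffOn ℝ 4 u (Icc 0 1) ∧
    (∃ x ∈ Icc (0:ℝ) 1, u x ≠ 0) ∧
    (∀ x ∈ Icc (0:ℝ) 1,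
      iteratedDerivWithin 4 u (Icc 0 1) x + A * iteratedDerivWithin 2 u (Icc 0 1) x + B * u x = 0) ∧
    u 0 = 0 ∧ u 1 = 0 ∧
    iteratedDerivWithin 2 u (Icc 0 1) 0 = 0 ∧
    iteratedDerivWithin 2 u (Icc 0 1) 1 = 0

theorem IsHingedEigenfunction.exists_nat {A B : ℂ} {u : ℝ → ℂ} (hu : IsHingedEigenfunction A B u) :
    ∃ k : ℕ, 1 ≤ k ∧ ((k : ℂ) * π) ^ 4 - A * ((k : ℂ) * π) ^ 2 + B = 0 := by
  obtain ⟨hu, hne, hode, h0, h1, h20, h21⟩ := hu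
  set D : ℕ → ℝ → ℂ := fun m => iteratedDerivWithin m u (Icc 0 1) with hD
  have hderiv : ∀ m < 4, ∀ x ∈ Icc (0:ℝ) 1, HasDerivWithinAt (D m) (D (m + 1) x) (Icc 0 1) x :=
    fun m hm x hx => hu.hasDerivWithinAt_iteratedDerivWithin_s10 (by exact_mod_cast hm)
      (uniqueDiffOn_Icc zero_lt_one) hx
  have hD0 : D 0 = u := iteratedDerivWithin_zero
  obtain ⟨X₁, hX₁⟩ : ∃ X, 1 * (X * X) + A * X + B = 0 :=
    exists_quadratic_eq_zero one_ne_zero (IsAlgClosed.exists_eq_mul_self _)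
  set X₂ := -A - X₁
  suffices ∃ X, X ^ 2 + A * X + B = 0 ∧ ∃ k : ℕ, 1 ≤ k ∧ X = -((k : ℂ) * π) ^ 2 by
    obtain ⟨X, hX, k, hk, rfl⟩ := this
    exact ⟨k, hk, by linear_combination hX⟩
  by_cases hv : ∀ x ∈ Icc (0:ℝ) 1, D 2 x - X₂ * u x = 0
  · refine ⟨X₂, by linear_combination hX₁, exists_nat_eq_neg_sq_of_hasDerivWithinAt
      (v := u) (w := D 1) (hD0 ▸ hderiv 0 (by norm_num)) (fun x hx => ?_) h0 h1 hne⟩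
    exact (hderiv 1 (by norm_num) x hx).congr_deriv (by linear_combination hv x hx)
  · push Not at hv
    refine ⟨X₁, by linear_combination hX₁, exists_nat_eq_neg_sq_of_hasDerivWithinAt
      (v := fun x => D 2 x - X₂ * u x) (w := fun x => D 3 x - X₂ * D 1 x)
      (fun x hx => ?_) (fun x hx => ?_) (by simp [hD, h0, h20]) (by simp [hD, h1, h21]) hv⟩
    · exact (hderiv 2 (by norm_num) x hx).sub ((hD0 ▸ hderiv 0 (by norm_num) x hx).const_mul X₂)
    · exact ((hderiv 3 (by norm_num) x hx).sub ((hderiv 1 (by norm_num) x hx).const_mul X₂)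
        ).congr_deriv (by linear_combination hode x hx - u x * hX₁)

theorem isHingedEigenfunction_sin {A B : ℂ} {k : ℕ} (hk : 1 ≤ k)
    (hroot : ((k : ℂ) * π) ^ 4 - A * ((k : ℂ) * π) ^ 2 + B = 0) :
    IsHingedEigenfunction A B fun x => (Real.sin (k * π * x) : ℂ) := by
  set c : ℝ := k * π with hc
  have hsin (x : ℝ) : HasDerivAt (fun x => Real.sin (c * x)) (c * Real.cos (c * x)) x := by
    simpa [mul_comm] using ((hasDerivAt_id x).const_mul c).sin
  have hcos (x : ℝ) : HasDerivAt (fun x => c * Real.cos (c * x)) (-c ^ 2 * Real.sin (c * x)) x :=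
    (((hasDerivAt_id x).const_mul c).cos.const_mul c).congr_deriv
      (by simp only [id, mul_one]; ring)
  have heven := iteratedDerivWithin_two_mul_eq_pow_mul (uniqueDiffOn_Icc zero_lt_one)
    (fun x => (hsin x).ofReal_comp) (X := -(c : ℂ) ^ 2)
    fun x => (hcos x).ofReal_comp.congr_deriv (by push_cast; ring)
  have h2 (x) (hx : x ∈ Icc (0:ℝ) 1) :
      iteratedDerivWithin 2 (fun x => (Real.sin (c * x) : ℂ)) (Icc 0 1) x
        = -(c : ℂ) ^ 2 * Real.sin (c * x) := by
    simpa only [mul_one, pow_one] using heven 1 x hx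
  have h4 (x) (hx : x ∈ Icc (0:ℝ) 1) :
      iteratedDerivWithin 4 (fun x => (Real.sin (c * x) : ℂ)) (Icc 0 1) x
        = (c : ℂ) ^ 4 * Real.sin (c * x) := by
    convert heven 2 x hx using 2
    ring
  have hsin1 : Real.sin c = 0 := Real.sin_nat_mul_pi k
  have hroot' : (c : ℂ) ^ 4 - A * (c : ℂ) ^ 2 + B = 0 := by
    rw [hc]; push_cast; exact hroot
  refine ⟨?_, ⟨1 / (2 * k), ⟨by positivity, ?_⟩, ?_⟩, fun x hx => ?_, by simp, by simp [hsin1],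
    ?_, ?_⟩
  · exact (Complex.ofRealCLM.contDiff.comp
      (Real.contDiff_sin.comp (contDiff_const.mul contDiff_id))).contDiffOn
  · rw [div_le_one (by positivity)]
    have : (1 : ℝ) ≤ k := by exact_mod_cast hk
    linarith
  · have : c * (1 / (2 * k)) = π / 2 := by rw [hc]; field_simp
    simp only [this, Real.sin_pi_div_two]
    norm_num
  · rw [h4 x hx, h2 x hx]
    linear_combination (Real.sin (c * x) : ℂ) * hroot'
  · rw [h2 0 (left_mem_Icc.2 zero_le_one)]
    simp
  · rw [h2 1 (right_mem_Icc.2 zero_le_one)]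
    simp [hsin1]

theorem exists_isHingedEigenfunction_iff (A B : ℂ) :
    (∃ u, IsHingedEigenfunction A B u) ↔
      ∃ k : ℕ, 1 ≤ k ∧ ((k : ℂ) * π) ^ 4 - A * ((k : ℂ) * π) ^ 2 + B = 0 :=
  ⟨fun ⟨_, hu⟩ => hu.exists_nat, fun ⟨_, hk, hroot⟩ => ⟨_, isHingedEigenfunction_sin hk hroot⟩⟩

theorem wave_schrodinger_eigenvalue_equation_general (μ : ℝ) :
    (∃ u : ℝ → ℂ,
      ContDiffOn ℝ 4 u (Icc 0 1) ∧
      (∃ x ∈ Icc (0:ℝ) 1, u x ≠ 0) ∧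
      (∀ x ∈ Icc (0:ℝ) 1,
        iteratedDerivWithin 4 u (Icc 0 1) x
          + ((μ : ℂ) ^ 2 - (μ : ℂ)) * iteratedDerivWithin 2 u (Icc 0 1) x
          + ((μ : ℂ) - (μ : ℂ) ^ 3) * u x = 0) ∧
      u 0 = 0 ∧ u 1 = 0 ∧
      iteratedDerivWithin 2 u (Icc 0 1) 0 = 0 ∧
      iteratedDerivWithin 2 u (Icc 0 1) 1 = 0) ↔
    ∃ k : ℕ, 1 ≤ k ∧
      (k : ℝ) ^ 4 * π ^ 4 - (μ ^ 2 - μ) * (k : ℝ) ^ 2 * π ^ 2 + (μ - μ ^ 3) = 0 := by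
  refine (exists_isHingedEigenfunction_iff ((μ : ℂ) ^ 2 - μ) (μ - (μ : ℂ) ^ 3)).trans
    (exists_congr fun k => and_congr_right fun _ => ?_)
  rw [← Complex.ofReal_inj]
  push_cast
  ring_nf

/-- Eigenvalue equation for the conservative wave–Schrödinger coupled system: for real
`μ ≠ 0, 1`, the boundary value problem `u'''' + (μ² − μ)u'' + (μ − μ³)u = 0` on `[0,1]`,
`u(0) = u(1) = u''(0) = u''(1) = 0`, has a nonzero solution iff
`k⁴π⁴ − (μ² − μ)k²π² + (μ − μ³) = 0` for some positive integer `k`. -/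
theorem wave_schrodinger_eigenvalue_equation (μ : ℝ) (hμ0 : μ ≠ 0) (hμ1 : μ ≠ 1) :
    (∃ u : ℝ → ℂ,
      ContDiffOn ℝ 4 u (Icc 0 1) ∧
      (∃ x ∈ Icc (0:ℝ) 1, u x ≠ 0) ∧
      (∀ x ∈ Icc (0:ℝ) 1,
        iteratedDerivWithin 4 u (Icc 0 1) x
          + ((μ : ℂ) ^ 2 - (μ : ℂ)) * iteratedDerivWithin 2 u (Icc 0 1) x
          + ((μ : ℂ) - (μ : ℂ) ^ 3) * u x = 0) ∧
      u 0 = 0 ∧ u 1 = 0 ∧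
      iteratedDerivWithin 2 u (Icc 0 1) 0 = 0 ∧
      iteratedDerivWithin 2 u (Icc 0 1) 1 = 0) ↔
    ∃ k : ℕ, 1 ≤ k ∧
      (k : ℝ) ^ 4 * π ^ 4 - (μ ^ 2 - μ) * (k : ℝ) ^ 2 * π ^ 2 + (μ - μ ^ 3) = 0 :=
  wave_schrodinger_eigenvalue_equation_general μ
end

section
/- There exist k₀ ∈ ℕ and a sequence of positive real numbers (μ_k)_{k≥k₀} such that for every integer k ≥ k₀, k⁴π⁴ − (μ_k² − μ_k)·k²π² + μ_k − μ_k³ = 0, and lim_{k→∞} k²·(μ_k − kπ) = 1/(2π²); that is, μ_k = kπ + 1/(2π²k²) + o(1/k²) as k → ∞. -/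
/-!
Substituting `μ = kπ + c/k²` turns the equation into `kπ(1 − 2π²c) − 2π²c + O(1/k²) = 0`.
At `c = 1/(2π²) ∓ 1/k` the left side is `±(2π³ + 2π²/k) − 1 + O(1/k²)`, whose sign is that of `±1`
because `π³ > 27`. The intermediate value theorem then gives a root `c_k` with
`|c_k − 1/(2π²)| ≤ 1/k`, and `μ_k = kπ + c_k/k²` satisfies `k²(μ_k − kπ) = c_k → 1/(2π²)`.
-/

open Real Filter

noncomputable def dispersion (x μ : ℝ) : ℝ :=
  x ^ 4 * π ^ 4 - (μ ^ 2 - μ) * x ^ 2 * π ^ 2 + (μ - μ ^ 3)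

lemma continuous_dispersion (x : ℝ) : Continuous (dispersion x) := by
  unfold dispersion; fun_prop

lemma dispersion_mul_pi_add_div_sq {x : ℝ} (hx : x ≠ 0) (c : ℝ) :
    dispersion x (x * π + c / x ^ 2) =
      x * π * (1 - 2 * π ^ 2 * c) - 2 * π ^ 2 * c
        + ((c - π ^ 2 * c ^ 2) / x ^ 2 - 3 * π * c ^ 2 / x ^ 3 - c ^ 3 / x ^ 6) := by
  unfold dispersion
  field_simp
  ring

lemma abs_dispersion_remainder_le {x c : ℝ} (hx : 1 ≤ x) (hc : |c| ≤ 1) :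
    |(c - π ^ 2 * c ^ 2) / x ^ 2 - 3 * π * c ^ 2 / x ^ 3 - c ^ 3 / x ^ 6| ≤ 30 := by
  have hc2 : c ^ 2 ≤ 1 := by nlinarith [abs_le.mp hc, sq_abs c]
  have h1 : |c - π ^ 2 * c ^ 2| ≤ 17 := by
    refine (abs_sub _ _).trans ?_
    rw [abs_mul, abs_of_nonneg (by positivity : (0:ℝ) ≤ π ^ 2), abs_of_nonneg (sq_nonneg c)]
    nlinarith [pi_pos, pi_le_four]
  have h2 : |3 * π * c ^ 2| ≤ 12 := by
    rw [abs_of_nonneg (by positivity)]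
    nlinarith [pi_pos, pi_le_four]
  have h3 : |c ^ 3| ≤ 1 := by
    rw [abs_pow]
    exact pow_le_one₀ (abs_nonneg c) hc
  calc _ ≤ |(c - π ^ 2 * c ^ 2) / x ^ 2| + |3 * π * c ^ 2 / x ^ 3| + |c ^ 3 / x ^ 6| :=
        (abs_sub _ _).trans (add_le_add_left (abs_sub _ _) _)
    _ ≤ |c - π ^ 2 * c ^ 2| + |3 * π * c ^ 2| + |c ^ 3| := by
        simp only [abs_div, abs_pow, abs_of_pos (by linarith : (0:ℝ) < x)]
        gcongr <;> exact div_le_self (by positivity) (one_le_pow₀ hx)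
    _ ≤ 30 := by linarith

lemma abs_le_one_of_abs_sub_le_inv {x c : ℝ} (hx : 2 ≤ x) (hc : |c - 1 / (2 * π ^ 2)| ≤ 1 / x) :
    |c| ≤ 1 := by
  have hL : 1 / (2 * π ^ 2) ≤ 1 / 2 := by
    gcongr
    nlinarith [pi_gt_three]
  have hx' : 1 / x ≤ 1 / 2 := by gcongr
  have hL0 : 0 ≤ 1 / (2 * π ^ 2) := by positivity
  rw [abs_le] at hc ⊢
  constructor <;> linarith [hc.1, hc.2]

lemma twenty_seven_lt_pi_pow_three : 27 < π ^ 3 := by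
  have h := pow_lt_pow_left₀ pi_gt_three (by norm_num) (by norm_num : 3 ≠ 0)
  norm_num at h
  exact h

lemma dispersion_pos_below {x : ℝ} (hx : 2 ≤ x) :
    0 < dispersion x (x * π + (1 / (2 * π ^ 2) - 1 / x) / x ^ 2) := by
  have hx0 : x ≠ 0 := by positivity
  have hR := abs_dispersion_remainder_le (c := 1 / (2 * π ^ 2) - 1 / x) (by linarith)
    (abs_le_one_of_abs_sub_le_inv hx (by simp [abs_of_pos (by linarith : 0 < x)]))
  have hlead : x * π * (1 - 2 * π ^ 2 * (1 / (2 * π ^ 2) - 1 / x))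
      - 2 * π ^ 2 * (1 / (2 * π ^ 2) - 1 / x) = 2 * π ^ 3 - 1 + 2 * π ^ 2 / x := by
    field_simp; ring
  rw [dispersion_mul_pi_add_div_sq hx0, hlead]
  have : 0 < 2 * π ^ 2 / x := by positivity
  linarith [(abs_le.mp hR).1, twenty_seven_lt_pi_pow_three]

lemma dispersion_neg_above {x : ℝ} (hx : 2 ≤ x) :
    dispersion x (x * π + (1 / (2 * π ^ 2) + 1 / x) / x ^ 2) < 0 := by
  have hx0 : x ≠ 0 := by positivity
  have hR := abs_dispersion_remainder_le (c := 1 / (2 * π ^ 2) + 1 / x) (by linarith)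
    (abs_le_one_of_abs_sub_le_inv hx (by simp [abs_of_pos (by linarith : 0 < x)]))
  have hlead : x * π * (1 - 2 * π ^ 2 * (1 / (2 * π ^ 2) + 1 / x))
      - 2 * π ^ 2 * (1 / (2 * π ^ 2) + 1 / x) = -2 * π ^ 3 - 1 - 2 * π ^ 2 / x := by
    field_simp; ring
  rw [dispersion_mul_pi_add_div_sq hx0, hlead]
  have : 0 < 2 * π ^ 2 / x := by positivity
  linarith [(abs_le.mp hR).2, twenty_seven_lt_pi_pow_three]

lemma exists_dispersion_root {x : ℝ} (hx : 2 ≤ x) :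
    ∃ c, |c - 1 / (2 * π ^ 2)| ≤ 1 / x ∧ dispersion x (x * π + c / x ^ 2) = 0 := by
  have hab : 1 / (2 * π ^ 2) - 1 / x ≤ 1 / (2 * π ^ 2) + 1 / x := by
    have : 0 < 1 / x := by positivity
    linarith
  have hcont : Continuous fun c => dispersion x (x * π + c / x ^ 2) :=
    (continuous_dispersion x).comp (by fun_prop)
  obtain ⟨c, hc, hroot⟩ := intermediate_value_Icc' hab hcont.continuousOn
    ⟨(dispersion_neg_above hx).le, (dispersion_pos_below hx).le⟩
  exact ⟨c, abs_sub_le_iff.mpr ⟨by linarith [hc.2], by linarith [hc.1]⟩, hroot⟩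

/-- First branch of eigenvalues of the conservative wave–Schrödinger coupled operator:
there are positive `μ_k` with `k⁴π⁴ − (μ_k² − μ_k)k²π² + μ_k − μ_k³ = 0` and
`μ_k = kπ + 1/(2π²k²) + o(1/k²)` as `k → ∞`. -/
theorem wave_schrodinger_first_branch :
    ∃ (k₀ : ℕ) (μ : ℕ → ℝ),
      (∀ k : ℕ, k₀ ≤ k →
        0 < μ k ∧
        (k : ℝ) ^ 4 * π ^ 4 - ((μ k) ^ 2 - μ k) * (k : ℝ) ^ 2 * π ^ 2
          + (μ k - (μ k) ^ 3) = 0) ∧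
      Tendsto (fun k : ℕ => (k : ℝ) ^ 2 * (μ k - (k : ℝ) * π)) atTop
        (nhds (1 / (2 * π ^ 2))) := by
  have hroots : ∀ k : ℕ, ∃ c : ℝ, 2 ≤ k →
      |c - 1 / (2 * π ^ 2)| ≤ 1 / (k : ℝ) ∧ dispersion k (k * π + c / k ^ 2) = 0 := fun k => by
    by_cases hk : 2 ≤ k
    · obtain ⟨c, hc⟩ := exists_dispersion_root (x := k) (by exact_mod_cast hk)
      exact ⟨c, fun _ => hc⟩
    · exact ⟨0, fun h => absurd h hk⟩
  choose c hc using hroots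
  refine ⟨2, fun k => k * π + c k / k ^ 2, fun k hk => ⟨?_, (hc k hk).2⟩, ?_⟩
  · have hx : (2 : ℝ) ≤ k := by exact_mod_cast hk
    have hck := abs_le.mp (abs_le_one_of_abs_sub_le_inv hx (hc k hk).1)
    have : -1 ≤ c k / k ^ 2 := by
      rw [le_div_iff₀ (by positivity)]
      nlinarith
    nlinarith [pi_gt_three]
  · have hlim : Tendsto c atTop (nhds (1 / (2 * π ^ 2))) := by
      rw [tendsto_iff_norm_sub_tendsto_zero]
      refine squeeze_zero' (Eventually.of_forall fun _ => norm_nonneg _) ?_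
        tendsto_one_div_atTop_nhds_zero_nat
      filter_upwards [eventually_ge_atTop 2] with k hk
      rw [Real.norm_eq_abs]
      exact (hc k hk).1
    refine hlim.congr' ?_
    filter_upwards [eventually_ge_atTop 1] with k hk
    have : (k : ℝ) ≠ 0 := by positivity
    field_simp
    ring
end

section
/- There exists a constant C > 0 such that for every real number y, ∑_{k=1}^∞ 1/√( (k²π² − y)² + 1 ) ≤ C. -/
open Real

/-!
Put `s = √(max y 0) / π` and let `n` be the integer nearest to `s`. Then
`|k²π² - y| ≥ π² |k² - s²| = π² |k - s| (k + s) ≥ (k - n)²`, because `|k - s| ≥ |k - n| / 2`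
and `k + s ≥ |k - n|` whenever `k ≠ n`. Hence the `k`-th term is at most `2 / ((k - n)² + 1)`,
and the shifted indices `k - n` are distinct integers, so the series is dominated by
`∑_{m ∈ ℤ} 2 / (m² + 1)` independently of `y`.
-/

lemma summable_two_div_int_sq_add_one : Summable fun m : ℤ => 2 / ((m : ℝ) ^ 2 + 1) := by
  refine ((summable_one_div_int_pow.2 one_lt_two).mul_left 2).of_norm_bounded_eventually ?_
  filter_upwards [Set.Finite.compl_mem_cofinite (Set.finite_singleton (0 : ℤ))] with m hm
  have hm : (m : ℝ) ≠ 0 := by simpa using hm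
  rw [Real.norm_of_nonneg (by positivity), ← mul_one_div]
  gcongr
  linarith

lemma one_div_sqrt_sq_add_one_le (u : ℝ) : 1 / √(u ^ 2 + 1) ≤ 2 / (|u| + 1) := by
  have h : (|u| + 1) / 2 ≤ √(u ^ 2 + 1) :=
    Real.le_sqrt_of_sq_le (by nlinarith [sq_abs u, abs_nonneg u, sq_nonneg (|u| - 1)])
  calc 1 / √(u ^ 2 + 1) ≤ 1 / ((|u| + 1) / 2) := by gcongr
    _ = 2 / (|u| + 1) := one_div_div _ _

lemma abs_sub_max_zero_le_abs_sub {a : ℝ} (ha : 0 ≤ a) (y : ℝ) : |a - max y 0| ≤ |a - y| := by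
  rcases le_total y 0 with hy | hy
  · rw [max_eq_right hy, sub_zero, abs_of_nonneg ha, abs_of_nonneg (by linarith)]
    linarith
  · rw [max_eq_left hy]

lemma sq_sub_le_two_mul_abs_sq_sub_sq {K n : ℤ} {s : ℝ} (hK : 1 ≤ K) (hs : 0 ≤ s)
    (hsn : |s - n| ≤ 1 / 2) : ((K : ℝ) - n) ^ 2 ≤ 2 * |(K : ℝ) ^ 2 - s ^ 2| := by
  obtain ⟨hsn₁, hsn₂⟩ := abs_le.1 hsn
  have hK' : (1 : ℝ) ≤ K := by exact_mod_cast hK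
  have hn : (0 : ℝ) ≤ n := by
    have : (-1 : ℤ) < n := by exact_mod_cast (show (-1 : ℝ) < n by linarith)
    exact_mod_cast (show 0 ≤ n by omega)
  rcases eq_or_ne K n with rfl | hKn
  · rw [sub_self, zero_pow two_ne_zero]
    positivity
  have hd : (1 : ℝ) ≤ |(K : ℝ) - n| := by
    rw [← Int.cast_sub, ← Int.cast_abs, ← Int.cast_one, Int.cast_le]
    exact Int.one_le_abs (sub_ne_zero.2 hKn)
  have hKs : |(K : ℝ) - n| / 2 ≤ |(K : ℝ) - s| := by
    linarith [abs_sub_le (K : ℝ) s n]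
  have hKs' : |(K : ℝ) - n| ≤ K + s := by
    rcases abs_cases ((K : ℝ) - n) with ⟨h, _⟩ | ⟨h, _⟩ <;> rw [h] <;> linarith
  calc ((K : ℝ) - n) ^ 2 = 2 * (|(K : ℝ) - n| / 2 * |(K : ℝ) - n|) := by rw [← sq_abs]; ring
    _ ≤ 2 * (|(K : ℝ) - s| * (K + s)) := by gcongr
    _ = 2 * |(K : ℝ) ^ 2 - s ^ 2| := by
      rw [sq_sub_sq, abs_mul, abs_of_nonneg (by linarith : (0 : ℝ) ≤ K + s)]
      ring

lemma one_div_sqrt_le_two_div_sq_sub_round_add_one (y : ℝ) (k : ℕ) :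
    1 / √((((k : ℝ) + 1) ^ 2 * π ^ 2 - y) ^ 2 + 1) ≤
      2 / ((((k + 1 - round (√(max y 0) / π) : ℤ)) : ℝ) ^ 2 + 1) := by
  set s := √(max y 0) / π
  have hπs : s ^ 2 * π ^ 2 = max y 0 := by
    rw [div_pow, Real.sq_sqrt (le_max_right y 0)]
    field_simp
  have hround := sq_sub_le_two_mul_abs_sq_sub_sq (K := k + 1) (by omega) (by positivity)
    (abs_sub_round s)
  push_cast at hround ⊢
  have hgap : ((k + 1 : ℝ) - round s) ^ 2 ≤ |((k : ℝ) + 1) ^ 2 * π ^ 2 - y| :=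
    calc ((k + 1 : ℝ) - round s) ^ 2 ≤ π ^ 2 * |((k : ℝ) + 1) ^ 2 - s ^ 2| :=
          hround.trans (by gcongr; nlinarith [Real.pi_gt_three])
      _ = |((k : ℝ) + 1) ^ 2 * π ^ 2 - max y 0| := by
          rw [← hπs, ← mul_sub_right_distrib, abs_mul, abs_of_pos (pow_pos pi_pos 2), mul_comm]
      _ ≤ |((k : ℝ) + 1) ^ 2 * π ^ 2 - y| := abs_sub_max_zero_le_abs_sub (by positivity) y
  calc _ ≤ 2 / (|((k : ℝ) + 1) ^ 2 * π ^ 2 - y| + 1) := one_div_sqrt_sq_add_one_le _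
    _ ≤ _ := by gcongr

/-- The transfer-function series is uniformly bounded on the line `Re λ = 1`: there is a
constant `C > 0` with `∑_{k=1}^∞ 1/√((k²π² − y)² + 1) ≤ C` for every real `y`.
(The sum over `k ≥ 1` is written as a `tsum` over `k : ℕ` at index `k + 1`.) -/
theorem transfer_function_series_bounded :
    ∃ C > (0:ℝ), ∀ y : ℝ,
      (∑' k : ℕ,
        1 / Real.sqrt (((((k : ℝ) + 1) ^ 2 * π ^ 2 - y) ^ 2) + 1)) ≤ C := by
  have hφ := summable_two_div_int_sq_add_one
  refine ⟨_, hφ.tsum_pos (fun m => by positivity) 0 (by norm_num), fun y => ?_⟩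
  set n := round (√(max y 0) / π)
  have hshift : Function.Injective fun k : ℕ => (k + 1 - n : ℤ) := fun a b h => by
    simpa using h
  have hle := one_div_sqrt_le_two_div_sq_sub_round_add_one y
  calc _ ≤ ∑' k : ℕ, 2 / (((k + 1 - n : ℤ) : ℝ) ^ 2 + 1) :=
        Summable.tsum_le_tsum hle
          ((hφ.comp_injective hshift).of_nonneg_of_le (fun _ => by positivity) hle)
          (hφ.comp_injective hshift)
    _ ≤ _ := tsum_comp_le_tsum_of_inj hφ (fun _ => by positivity) hshift
end

section
/- For every real number y ≥ 2, ∑_{k=1}^{⌊y⌋ − 1} 1/(y² − k²) ≤ 1, where ⌊y⌋ denotes the integer part of y. -/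
open Real Finset

/-- For every real `y ≥ 2`, `∑_{k=1}^{⌊y⌋−1} 1/(y² − k²) ≤ 1`. -/
theorem partial_sum_below_estimate (y : ℝ) (hy : 2 ≤ y) :
    ∑ k ∈ Finset.Icc 1 (⌊y⌋₊ - 1), 1 / (y ^ 2 - (k : ℝ) ^ 2) ≤ 1 := by
  have hy0 : (0:ℝ) ≤ y := by linarith
  have hn2 : 2 ≤ ⌊y⌋₊ := Nat.le_floor (by exact_mod_cast hy)
  have hny : (⌊y⌋₊ : ℝ) ≤ y := Nat.floor_le hy0
  have hcard : (⌊y⌋₊ - 1 : ℕ) ≤ ⌊y⌋₊ - 1 := le_refl _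
  have hstep : ∀ k ∈ Finset.Icc 1 (⌊y⌋₊ - 1), 1 / (y ^ 2 - (k : ℝ) ^ 2) ≤ 1 / (y + 1) := by
    intro k hk
    rw [Finset.mem_Icc] at hk
    have hk1 : (1:ℝ) ≤ (k:ℝ) := by exact_mod_cast hk.1
    have hk2 : (k:ℝ) ≤ y - 1 := by
      have : (k:ℝ) ≤ (⌊y⌋₊ - 1 : ℕ) := by exact_mod_cast hk.2
      have hc : ((⌊y⌋₊ - 1 : ℕ) : ℝ) = (⌊y⌋₊ : ℝ) - 1 := by
        have : 1 ≤ ⌊y⌋₊ := by omega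
        push_cast [Nat.cast_sub this]
        ring
      rw [hc] at this
      linarith
    have hpos : (0:ℝ) < y + 1 := by linarith
    have hden : y + 1 ≤ y ^ 2 - (k:ℝ) ^ 2 := by nlinarith
    exact one_div_le_one_div_of_le hpos hden
  calc ∑ k ∈ Finset.Icc 1 (⌊y⌋₊ - 1), 1 / (y ^ 2 - (k : ℝ) ^ 2)
      ≤ ∑ _k ∈ Finset.Icc 1 (⌊y⌋₊ - 1), 1 / (y + 1) := Finset.sum_le_sum hstep
    _ = ((⌊y⌋₊ - 1 : ℕ) : ℝ) * (1 / (y + 1)) := by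
        rw [Finset.sum_const, Nat.card_Icc]
        simp [mul_comm]
    _ ≤ 1 := by
        have hle : ((⌊y⌋₊ - 1 : ℕ) : ℝ) ≤ y - 1 := by
          have h1 : 1 ≤ ⌊y⌋₊ := by omega
          push_cast [Nat.cast_sub h1]
          linarith
        have hpos : (0:ℝ) < y + 1 := by linarith
        rw [mul_one_div, div_le_one hpos]
        linarith
end
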